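/- arXiv:1405.0527 — 4 statements merged into one kernel-verified Lean document; each statement's English description precedes it below -/
import Mathlib

section
/- Let V be a finite type, let r be a relation on V, and let A be the adjacency matrix of r. Define the sequence of matrices B₀ = A and B_{m+1} = B_m · B_m + B_m (matrix product and entrywise sum over ℕ). Then for every m ∈ ℕ and all i, j ∈ V, the (i, j) entry of B_m is nonzero if and only if there exists t with 1 ≤ t ≤ 2^m and a walk of length t from i to j with respect to r. -/
/-- `IsWalk r t i j f`: `f` is a walk of length `t` from `i` to `j` with respect
to the relation `r`. -/
def IsWalk {V : Type*} (r : V → V → Prop) (t : ℕ) (i j : V) (f : ℕ → V) : Prop :=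
  f 0 = i ∧ f t = j ∧ ∀ l < t, r (f l) (f (l + 1))

/-- The adjacency matrix (over ℕ) of a relation `r` on a finite type. -/
def adjMatrixOf {V : Type*} [Fintype V] (r : V → V → Prop) [DecidableRel r] :
    Matrix V V ℕ :=
  fun i j => if r i j then 1 else 0

lemma walk_concat {V : Type*} {r : V → V → Prop} {t1 t2 : ℕ} {i k j : V}
    {f g : ℕ → V} (hf : IsWalk r t1 i k f) (hg : IsWalk r t2 k j g) :
    ∃ h : ℕ → V, IsWalk r (t1 + t2) i j h := by
  obtain ⟨hf0, hf1, hfe⟩ := hf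
  obtain ⟨hg0, hg1, hge⟩ := hg
  refine ⟨fun l => if l < t1 then f l else g (l - t1), ?_, ?_, ?_⟩
  · by_cases h : 0 < t1
    · simp [h, hf0]
    · have ht : t1 = 0 := by omega
      subst ht
      simp [hg0, ← hf1, hf0]
  · have : ¬ (t1 + t2 < t1) := by omega
    simp [this, hg1]
  · intro l hl
    rcases lt_trichotomy (l + 1) t1 with h | h | h
    · have hl1 : l < t1 := by omega
      simpa [h, hl1] using hfe l hl1
    · have hl1 : l < t1 := by omega
      have : ¬ (l + 1 < t1) := by omega
      simp only [hl1, this, if_true, if_false]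
      have he : l + 1 - t1 = 0 := by omega
      rw [he, hg0]
      rw [← h] at hf1
      rw [← hf1]
      exact hfe l hl1
    · have hl1 : ¬ (l < t1) := by omega
      have h2 : ¬ (l + 1 < t1) := by omega
      simp only [hl1, h2, if_false]
      have he : l + 1 - t1 = (l - t1) + 1 := by omega
      rw [he]
      exact hge (l - t1) (by omega)

lemma walk_split_left {V : Type*} {r : V → V → Prop} {t : ℕ} {i j : V}
    {f : ℕ → V} (hf : IsWalk r t i j f) (s : ℕ) (hs : s ≤ t) :
    IsWalk r s i (f s) f :=
  ⟨hf.1, rfl, fun l hl => hf.2.2 l (by omega)⟩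

lemma walk_split_right {V : Type*} {r : V → V → Prop} {t : ℕ} {i j : V}
    {f : ℕ → V} (hf : IsWalk r t i j f) (s : ℕ) (hs : s ≤ t) :
    IsWalk r (t - s) (f s) j (fun l => f (s + l)) := by
  refine ⟨by simp, ?_, fun l hl => ?_⟩
  · simp only [Nat.add_sub_cancel' hs]; exact hf.2.1
  · show r (f (s + l)) (f (s + (l + 1)))
    have he : s + (l + 1) = s + l + 1 := by omega
    rw [he]
    exact hf.2.2 (s + l) (by omega)

/-- Iterated squaring `B_{m+1} = B_m * B_m + B_m` starting from the adjacency
matrix: an entry `(i, j)` of `B_m` is nonzero iff there is a walk of some length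
`t` with `1 ≤ t ≤ 2^m` from `i` to `j`. -/
theorem iterSquare_ne_zero_iff_walk {V : Type*} [Fintype V] [DecidableEq V]
    (r : V → V → Prop) [DecidableRel r]
    (B : ℕ → Matrix V V ℕ)
    (hB0 : B 0 = adjMatrixOf r)
    (hBsucc : ∀ m, B (m + 1) = B m * B m + B m)
    (m : ℕ) (i j : V) :
    B m i j ≠ 0 ↔ ∃ t : ℕ, 1 ≤ t ∧ t ≤ 2 ^ m ∧ ∃ f : ℕ → V, IsWalk r t i j f := by
  induction m generalizing i j with
  | zero =>
    rw [hB0]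
    constructor
    · intro h
      have hr : r i j := by
        by_contra hr
        simp [adjMatrixOf, hr] at h
      exact ⟨1, le_refl 1, le_refl 1,
        fun l => if l = 0 then i else j, by simp [IsWalk],
        by simp, fun l hl => by interval_cases l; simpa⟩
    · rintro ⟨t, ht1, ht2, f, hf0, hft, hfe⟩
      have ht : t = 1 := by omega
      subst ht
      have := hfe 0 (by omega)
      rw [hf0, hft] at this
      simp [adjMatrixOf, this]
  | succ m ih =>
    rw [hBsucc m]
    have key : (B m * B m + B m) i j ≠ 0 ↔
        (∃ k, B m i k ≠ 0 ∧ B m k j ≠ 0) ∨ B m i j ≠ 0 := by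
      rw [Matrix.add_apply, Matrix.mul_apply, Ne, Nat.add_eq_zero, not_and_or,
        Finset.sum_eq_zero_iff]
      push_neg
      constructor
      · rintro (⟨k, -, hk⟩ | h)
        · exact Or.inl ⟨k, (Nat.mul_ne_zero_iff.mp hk).1, (Nat.mul_ne_zero_iff.mp hk).2⟩
        · exact Or.inr h
      · rintro (⟨k, h1, h2⟩ | h)
        · exact Or.inl ⟨k, Finset.mem_univ k, Nat.mul_ne_zero h1 h2⟩
        · exact Or.inr h
    rw [key]
    constructor
    · rintro (⟨k, h1, h2⟩ | h)
      · obtain ⟨t1, ht11, ht12, f, hf⟩ := (ih i k).mp h1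
        obtain ⟨t2, ht21, ht22, g, hg⟩ := (ih k j).mp h2
        obtain ⟨h, hh⟩ := walk_concat hf hg
        exact ⟨t1 + t2, by omega, by rw [pow_succ]; omega, h, hh⟩
      · obtain ⟨t, ht1, ht2, f, hf⟩ := (ih i j).mp h
        exact ⟨t, ht1, by rw [pow_succ]; omega, f, hf⟩
    · rintro ⟨t, ht1, ht2, f, hf⟩
      by_cases hle : t ≤ 2 ^ m
      · exact Or.inr ((ih i j).mpr ⟨t, ht1, hle, f, hf⟩)
      · push_neg at hle
        left
        refine ⟨f (2 ^ m), (ih i (f (2 ^ m))).mpr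
          ⟨2 ^ m, Nat.one_le_two_pow, le_refl _, f,
            walk_split_left hf (2 ^ m) (by omega)⟩,
          (ih (f (2 ^ m)) j).mpr
          ⟨t - 2 ^ m, by omega, ?_, _, walk_split_right hf (2 ^ m) (by omega)⟩⟩
        rw [pow_succ] at ht2; omega
end

section
/- Let V be a finite type, let r be a relation on V, and let A be the adjacency matrix of r. Define B₀ = A and B_{m+1} = B_m · B_m + B_m (matrix product and entrywise sum over ℕ). If m ∈ ℕ satisfies 2^m ≥ card V, then for all i, j ∈ V the (i, j) entry of B_m is nonzero if and only if Relation.TransGen r i j holds, i.e. B_m is the path-complete matrix of r. -/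
/-- There is an `r`-path of length exactly `n` from `i` to `j`. -/
def HasPath {V : Type*} (r : V → V → Prop) (n : ℕ) (i j : V) : Prop :=
  ∃ f : ℕ → V, f 0 = i ∧ f n = j ∧ ∀ k < n, r (f k) (f (k + 1))

namespace HasPathAux

variable {V : Type*} {r : V → V → Prop}

lemma hasPath_zero {i j : V} : HasPath r 0 i j ↔ i = j := by
  constructor
  · rintro ⟨f, h0, hn, -⟩; rw [← h0, hn]
  · rintro rfl; exact ⟨fun _ => i, rfl, rfl, by omega⟩

lemma hasPath_one {i j : V} : HasPath r 1 i j ↔ r i j := by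
  constructor
  · rintro ⟨f, h0, hn, hs⟩
    have := hs 0 one_pos
    rwa [h0, hn] at this
  · intro h
    refine ⟨fun k => if k = 0 then i else j, by simp, by simp, ?_⟩
    intro k hk
    interval_cases k
    simpa using h

lemma hasPath_add {p q : ℕ} {i j : V} :
    HasPath r (p + q) i j ↔ ∃ k, HasPath r p i k ∧ HasPath r q k j := by
  constructor
  · rintro ⟨f, h0, hn, hs⟩
    refine ⟨f p, ⟨f, h0, rfl, fun k hk => hs k (by omega)⟩,
      ⟨fun k => f (p + k), by simp, by simpa using hn, ?_⟩⟩
    intro k hk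
    have := hs (p + k) (by omega)
    show r (f (p + k)) (f (p + (k + 1)))
    have e : p + (k + 1) = p + k + 1 := by omega
    rw [e]
    exact this
  · rintro ⟨k, ⟨f, hf0, hfp, hfs⟩, ⟨g, hg0, hgq, hgs⟩⟩
    refine ⟨fun t => if t < p then f t else g (t - p), ?_, ?_, ?_⟩
    · by_cases hp : 0 < p
      · simp [hp, hf0]
      · have hp0 : p = 0 := by omega
        subst hp0
        simp only [Nat.lt_irrefl, if_neg, not_lt, Nat.zero_le]
        simp [hg0, ← hfp, hf0]
    · have h1 : ¬ (p + q < p) := by omega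
      simp only [h1, if_neg, not_lt]
      simpa using hgq
    · intro t ht
      by_cases h1 : t + 1 < p
      · have h2 : t < p := by omega
        simp only [h1, h2, if_pos]
        exact hfs t (by omega)
      · by_cases h2 : t < p
        · have e : t + 1 = p := by omega
          simp only [h1, h2, if_pos, if_neg]
          have he : g (t + 1 - p) = f (t + 1) := by
            rw [e]; simp [hg0, ← hfp]
          rw [he]
          exact hfs t (by omega)
        · simp only [h1, h2, if_neg]
          have := hgs (t - p) (by omega)
          have e : t + 1 - p = t - p + 1 := by omega
          rw [e]
          exact this

lemma hasPath_shorten [Fintype V] :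
    ∀ n, 1 ≤ n → ∀ i j : V, HasPath r n i j →
      ∃ n', 1 ≤ n' ∧ n' ≤ Fintype.card V ∧ HasPath r n' i j := by
  intro n
  induction n using Nat.strong_induction_on with
  | _ n ih =>
    intro hn i j hp
    by_cases hle : n ≤ Fintype.card V
    · exact ⟨n, hn, hle, hp⟩
    · push_neg at hle
      obtain ⟨f, h0, hend, hs⟩ := hp
      obtain ⟨a, b, ha1, hab, hbn, hfab⟩ :
          ∃ a b : ℕ, 1 ≤ a ∧ a < b ∧ b ≤ n ∧ f a = f b := by
        have hcard : Fintype.card V < Fintype.card (Fin n) := by simpa using hle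
        obtain ⟨x, y, hxy, hfe⟩ :=
          Fintype.exists_ne_map_eq_of_card_lt (fun k : Fin n => f (k.1 + 1)) hcard
        rcases Ne.lt_or_gt hxy with hlt | hlt
        · exact ⟨x.1 + 1, y.1 + 1, by omega, by
            have := (Fin.lt_iff_val_lt_val).1 hlt; omega, by omega, hfe⟩
        · exact ⟨y.1 + 1, x.1 + 1, by omega, by
            have := (Fin.lt_iff_val_lt_val).1 hlt; omega, by omega, hfe.symm⟩
      set d := b - a with hd
      have hd1 : 1 ≤ d := by omega
      have hdn : d ≤ n - 1 := by omega
      set n' := n - d with hn'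
      have hn'1 : 1 ≤ n' := by omega
      have hn'lt : n' < n := by omega
      have hpath : HasPath r n' i j := by
        refine ⟨fun t => if t < a then f t else f (t + d), ?_, ?_, ?_⟩
        · simp only [if_pos (show (0:ℕ) < a by omega)]; exact h0
        · have h1 : ¬ (n' < a) := by omega
          simp only [h1, if_neg, not_lt]
          have e : n' + d = n := by omega
          rw [e]; exact hend
        · intro t ht
          by_cases h1 : t + 1 < a
          · have h2 : t < a := by omega
            simp only [h1, h2, if_pos]
            exact hs t (by omega)
          · by_cases h2 : t < a
            · have e : t + 1 = a := by omega
              simp only [h1, h2, if_pos, if_neg]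
              have he : f (t + 1 + d) = f (t + 1) := by
                rw [e]
                have eb : a + d = b := by omega
                rw [eb]
                exact hfab.symm
              rw [he]
              exact hs t (by omega)
            · simp only [h1, h2, if_neg]
              have := hs (t + d) (by omega)
              have e : t + 1 + d = t + d + 1 := by omega
              rw [e]
              exact this
      exact ih n' hn'lt hn'1 i j hpath

lemma transGen_iff {i j : V} :
    Relation.TransGen r i j ↔ ∃ n, 1 ≤ n ∧ HasPath r n i j := by
  constructor
  · intro h
    induction h with
    | single h => exact ⟨1, le_refl 1, hasPath_one.2 h⟩
    | tail _ hbc ih =>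
        obtain ⟨n, hn, hp⟩ := ih
        exact ⟨n + 1, by omega, hasPath_add.2 ⟨_, hp, hasPath_one.2 hbc⟩⟩
  · rintro ⟨n, hn, hp⟩
    obtain ⟨n, rfl⟩ : ∃ m, n = m + 1 := ⟨n - 1, by omega⟩
    clear hn
    induction n generalizing i with
    | zero => exact Relation.TransGen.single (hasPath_one.1 hp)
    | succ n ih =>
        have hp' : HasPath r (1 + (n + 1)) i j := by
          have e : n + 1 + 1 = 1 + (n + 1) := by omega
          rwa [e] at hp
        obtain ⟨k, h1, hrest⟩ := hasPath_add.1 hp'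
        exact Relation.TransGen.head (hasPath_one.1 h1) (ih hrest)

lemma matmul_ne_zero_iff [Fintype V] {M N : Matrix V V ℕ} {i j : V} :
    (M * N) i j ≠ 0 ↔ ∃ k, M i k ≠ 0 ∧ N k j ≠ 0 := by
  rw [Matrix.mul_apply]
  rw [Ne, Finset.sum_eq_zero_iff]
  push_neg
  simp [Nat.mul_eq_zero, not_or]

end HasPathAux

open HasPathAux
/-- Iterated squaring `B_{m+1} = B_m * B_m + B_m` starting from the adjacency
matrix of `r` computes, once `2^m ≥ card V`, the path-complete matrix of `r`:
entry `(i, j)` of `B m` is nonzero iff `j` is reachable from `i` by at least one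
`r`-step. -/
theorem iterSquare_pathComplete {V : Type*} [Fintype V] [DecidableEq V]
    (r : V → V → Prop) [DecidableRel r]
    (B : ℕ → Matrix V V ℕ)
    (hB0 : B 0 = adjMatrixOf r)
    (hBsucc : ∀ m, B (m + 1) = B m * B m + B m)
    (m : ℕ) (hm : Fintype.card V ≤ 2 ^ m) (i j : V) :
    B m i j ≠ 0 ↔ Relation.TransGen r i j := by
  have key : ∀ m i j, B m i j ≠ 0 ↔ ∃ n, 1 ≤ n ∧ n ≤ 2 ^ m ∧ HasPath r n i j := by
    intro m
    induction m with
    | zero =>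
        intro i j
        rw [hB0]
        constructor
        · intro h
          refine ⟨1, le_refl 1, by norm_num, hasPath_one.2 ?_⟩
          by_contra hr
          exact h (by simp [adjMatrixOf, hr])
        · rintro ⟨n, hn1, hn2, hp⟩
          have : n = 1 := by omega
          subst this
          have hr := hasPath_one.1 hp
          simp [adjMatrixOf, hr]
    | succ m ih =>
        intro i j
        rw [hBsucc]
        have hadd : (B m * B m + B m) i j ≠ 0 ↔
            (B m * B m) i j ≠ 0 ∨ B m i j ≠ 0 := by
          rw [Matrix.add_apply]
          omega
        rw [hadd, matmul_ne_zero_iff]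
        constructor
        · rintro (⟨k, hik, hkj⟩ | hij)
          · obtain ⟨n1, hn11, hn12, hp1⟩ := (ih i k).1 hik
            obtain ⟨n2, hn21, hn22, hp2⟩ := (ih k j).1 hkj
            refine ⟨n1 + n2, by omega, ?_, hasPath_add.2 ⟨k, hp1, hp2⟩⟩
            have : 2 ^ (m + 1) = 2 ^ m + 2 ^ m := by ring
            omega
          · obtain ⟨n, hn1, hn2, hp⟩ := (ih i j).1 hij
            refine ⟨n, hn1, ?_, hp⟩
            have : 2 ^ (m + 1) = 2 ^ m + 2 ^ m := by ring
            omega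
        · rintro ⟨n, hn1, hn2, hp⟩
          by_cases hle : n ≤ 2 ^ m
          · exact Or.inr ((ih i j).2 ⟨n, hn1, hle, hp⟩)
          · left
            push_neg at hle
            have e : n = 2 ^ m + (n - 2 ^ m) := by omega
            rw [e] at hp
            obtain ⟨k, hp1, hp2⟩ := hasPath_add.1 hp
            have h2 : 2 ^ (m + 1) = 2 ^ m + 2 ^ m := by ring
            refine ⟨k, (ih i k).2 ⟨2 ^ m, ?_, le_refl _, hp1⟩,
              (ih k j).2 ⟨n - 2 ^ m, by omega, by omega, hp2⟩⟩
            exact Nat.one_le_two_pow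
  rw [key m i j, transGen_iff]
  constructor
  · rintro ⟨n, hn1, hn2, hp⟩
    exact ⟨n, hn1, hp⟩
  · rintro ⟨n, hn1, hp⟩
    obtain ⟨n', hn'1, hn'2, hp'⟩ := hasPath_shorten n hn1 i j hp
    exact ⟨n', hn'1, le_trans hn'2 hm, hp'⟩
end

section
/- Let r be a deterministic relation on a type V (for all x, y, z, r x y and r x z imply y = z), let b ∈ V be terminal (there is no y with r b y), and suppose f is a walk of length t from a to b with respect to r. Then for every v ∈ V: there exists l ≤ t with f l = v if and only if (Relation.ReflTransGen r a v and Relation.ReflTransGen r v b). In other words, the vertices lying on the unique walk from a to b are exactly those reachable from a and from which b is reachable. -/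
/-- For a deterministic relation `r` with terminal vertex `b`, the vertices on a
walk from `a` to `b` are exactly those reachable from `a` and from which `b` is
reachable. -/
theorem walk_mem_iff_between {V : Type*} (r : V → V → Prop)
    (hdet : ∀ x y z : V, r x y → r x z → y = z)
    (a b : V) (hb : ¬ ∃ y, r b y)
    (t : ℕ) (f : ℕ → V) (hf : IsWalk r t a b f) :
    ∀ v : V, (∃ l ≤ t, f l = v) ↔
      (Relation.ReflTransGen r a v ∧ Relation.ReflTransGen r v b) := by
  obtain ⟨h0, ht, hstep⟩ := hf
  -- reachability from a to every f l
  have fwd : ∀ l, l ≤ t → Relation.ReflTransGen r a (f l) := by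
    intro l
    induction l with
    | zero => intro _; rw [h0]
    | succ n ih =>
      intro h
      exact (ih (Nat.le_of_succ_le h)).tail (hstep n (Nat.lt_of_succ_le h))
  -- reachability from f l to b
  have bwd : ∀ d l, l + d = t → Relation.ReflTransGen r (f l) b := by
    intro d
    induction d with
    | zero => intro l h; rw [Nat.add_zero] at h; rw [h, ht]
    | succ n ih =>
      intro l h
      have hl : l < t := by omega
      exact Relation.ReflTransGen.head (hstep l hl) (ih (l + 1) (by omega))
  intro v
  constructor
  · rintro ⟨l, hl, rfl⟩
    exact ⟨fwd l hl, bwd (t - l) l (by omega)⟩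
  · rintro ⟨hav, hvb⟩
    induction hav with
    | refl => exact ⟨0, Nat.zero_le t, h0⟩
    | @tail c d hac hcd ih =>
      obtain ⟨l, hl, hfl⟩ := ih (Relation.ReflTransGen.head hcd hvb)
      rcases Nat.lt_or_ge l t with hlt | hge
      · exact ⟨l + 1, hlt, hdet _ _ _ (hfl ▸ hstep l hlt) hcd⟩
      · have : c = b := by rw [← hfl]; rw [Nat.le_antisymm hl hge, ht]
        exact absurd ⟨d, this ▸ hcd⟩ hb
end

section
/- Let k, m ≥ 1 be integers and let T₁, …, T_m be random variables on a common probability space such that each T_i is the sum of at most k independent exponentially distributed random variables of rate 1 (independence is required only within each sum, not across different i). Then E[max(T₁, …, T_m)] ≤ 2·k + 2·ln m + 2. In particular, if m ≤ c^k for a constant c > 1, then E[max(T₁, …, T_m)] = O(k). -/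
/-!
Taking `θ = 1/2` in the Chernoff bound: a rate-1 exponential `Y` has `𝔼[exp (Y/2)] = 2`, so by
independence a sum of at most `k` of them exceeds `t` with probability at most `2^k e^{-t/2}`,
and by the union bound the maximum exceeds `t` with probability at most `C e^{-t/2}`,
`C = m 2^k`. Bounding this probability by `1` below `2 log C` and by `C e^{-t/2}` above gives
`𝔼[max] ≤ 2 log C + 2 ≤ 2k + 2 log m + 2`.
-/

open MeasureTheory ProbabilityTheory
open Real Set
open scoped ENNReal

lemma setLIntegral_Ioi_zero_le_of_le_mul_exp {g : ℝ → ℝ≥0∞} {C r : ℝ} (hC : 1 ≤ C) (hr : 0 < r)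
    (hg_one : ∀ t, g t ≤ 1) (hg_exp : ∀ t, g t ≤ ENNReal.ofReal (C * exp (-r * t))) :
    ∫⁻ t in Ioi 0, g t ≤ ENNReal.ofReal ((log C + 1) / r) := by
  -- beyond `a` the bound `C * exp (-r * t)` drops below `1`
  set a := log C / r with ha_def
  have ha : 0 ≤ a := div_nonneg (log_nonneg hC) hr.le
  rw [← Ioc_union_Ioi_eq_Ioi ha, lintegral_union measurableSet_Ioi (Ioc_disjoint_Ioi le_rfl)]
  have h_near : ∫⁻ t in Ioc 0 a, g t ≤ ENNReal.ofReal a :=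
    calc ∫⁻ t in Ioc 0 a, g t ≤ ∫⁻ _ in Ioc 0 a, 1 := lintegral_mono hg_one
      _ = ENNReal.ofReal a := by rw [setLIntegral_one, volume_Ioc, sub_zero]
  have h_far : ∫⁻ t in Ioi a, g t ≤ ENNReal.ofReal (1 / r) :=
    calc ∫⁻ t in Ioi a, g t ≤ ∫⁻ t in Ioi a, ENNReal.ofReal (C * exp (-r * t)) :=
          lintegral_mono hg_exp
      _ = ENNReal.ofReal (∫ t in Ioi a, C * exp (-r * t)) :=
          (ofReal_integral_eq_lintegral_ofReal ((exp_neg_integrableOn_Ioi a hr).const_mul C)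
            (ae_of_all _ fun t => by positivity)).symm
      _ = ENNReal.ofReal (1 / r) := by
          have h_exp : exp (-r * a) = C⁻¹ := by
            rw [ha_def, show -r * (log C / r) = -log C by field_simp, exp_neg,
              exp_log (by linarith)]
          rw [integral_const_mul, integral_exp_mul_Ioi (neg_neg_of_pos hr), h_exp]
          field_simp
  calc _ ≤ ENNReal.ofReal a + ENNReal.ofReal (1 / r) := add_le_add h_near h_far
    _ = ENNReal.ofReal ((log C + 1) / r) := by
      rw [← ENNReal.ofReal_add ha (by positivity), ha_def, add_div]

section

variable {Ω : Type*} [MeasurableSpace Ω] {μ : Measure Ω}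

lemma integral_le_toReal_setLIntegral_measure_lt {X : Ω → ℝ} (hX : AEMeasurable X μ) :
    ∫ ω, X ω ∂μ ≤ (∫⁻ t in Ioi 0, μ {ω | t < X ω}).toReal := by
  have hX_pos : AEMeasurable (fun ω => max (X ω) 0) μ := hX.max aemeasurable_const
  -- also when `X` is not integrable, where its integral is `0`
  have h_pos : ∫ ω, X ω ∂μ ≤ ∫ ω, max (X ω) 0 ∂μ := by
    by_cases hi : Integrable X μ
    · exact integral_mono hi hi.pos_part fun ω => le_max_left _ _
    · rw [integral_undef hi]
      exact integral_nonneg fun ω => le_max_right _ _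
  have h_nonneg : 0 ≤ᵐ[μ] fun ω => max (X ω) 0 := ae_of_all _ fun ω => le_max_right _ _
  rw [integral_eq_lintegral_of_nonneg_ae h_nonneg hX_pos.aestronglyMeasurable,
    lintegral_eq_lintegral_meas_lt μ h_nonneg hX_pos] at h_pos
  refine h_pos.trans_eq (congrArg _ (setLIntegral_congr_fun measurableSet_Ioi fun t ht => ?_))
  simp [lt_asymm (mem_Ioi.mp ht)]

lemma measure_lt_iSup_le_sum {ι : Type*} [Fintype ι] [Nonempty ι] (f : ι → Ω → ℝ) (t : ℝ) :
    μ {ω | t < ⨆ i, f i ω} ≤ ∑ i, μ {ω | t < f i ω} := by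
  have h_sub : {ω | t < ⨆ i, f i ω} = ⋃ i, {ω | t < f i ω} := by
    ext ω
    simpa using lt_ciSup_iff (Set.finite_range fun i => f i ω).bddAbove
  rw [h_sub]
  exact measure_iUnion_fintype_le μ _

end

section

variable {Ω : Type*} [MeasurableSpace Ω] {μ : Measure Ω} [IsProbabilityMeasure μ]

lemma lintegral_exp_half_mul_le_two {Y : Ω → ℝ} (hY : Measurable Y)
    (hY_tail : ∀ t, 0 ≤ t → μ {ω | t < Y ω} = ENNReal.ofReal (exp (-t))) :
    ∫⁻ ω, ENNReal.ofReal (exp (1 / 2 * Y ω)) ∂μ ≤ 2 := by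
  rw [lintegral_eq_lintegral_meas_lt μ (ae_of_all _ fun ω => (exp_pos _).le)
    (hY.const_mul _).exp.aemeasurable, ← Ioc_union_Ioi_eq_Ioi zero_le_one,
    lintegral_union measurableSet_Ioi (Ioc_disjoint_Ioi le_rfl)]
  have h_near : ∫⁻ s in Ioc 0 1, μ {ω | s < exp (1 / 2 * Y ω)} ≤ 1 :=
    calc ∫⁻ s in Ioc 0 1, μ {ω | s < exp (1 / 2 * Y ω)} ≤ ∫⁻ _ in Ioc (0 : ℝ) 1, 1 :=
          lintegral_mono fun _ => prob_le_one
      _ = 1 := by simp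
  have h_tail : ∀ s ∈ Ioi (1 : ℝ),
      μ {ω | s < exp (1 / 2 * Y ω)} = ENNReal.ofReal (s ^ (-2 : ℝ)) := by
    intro s hs
    have hs0 : 0 < s := zero_lt_one.trans hs
    have h_event : {ω | s < exp (1 / 2 * Y ω)} = {ω | 2 * log s < Y ω} := by
      ext ω
      change s < exp (1 / 2 * Y ω) ↔ 2 * log s < Y ω
      rw [← log_lt_iff_lt_exp hs0]
      constructor <;> intro h <;> linarith
    rw [h_event, hY_tail _ (by linarith [log_nonneg hs.out.le]), rpow_def_of_pos hs0]
    ring_nf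
  have h_far : ∫⁻ s in Ioi 1, μ {ω | s < exp (1 / 2 * Y ω)} ≤ 1 := by
    rw [setLIntegral_congr_fun measurableSet_Ioi h_tail,
      ← ofReal_integral_eq_lintegral_ofReal (integrableOn_Ioi_rpow_of_lt (by norm_num) one_pos)
        ((ae_restrict_iff' measurableSet_Ioi).2 (ae_of_all _ fun s hs =>
          rpow_nonneg (zero_le_one.trans hs.out.le) _)),
      integral_Ioi_rpow_of_lt (by norm_num) one_pos]
    norm_num
  calc _ ≤ (1 : ℝ≥0∞) + 1 := add_le_add h_near h_far
    _ = 2 := one_add_one_eq_two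

lemma integrable_exp_half_mul {Y : Ω → ℝ} (hY : Measurable Y)
    (hY_tail : ∀ t, 0 ≤ t → μ {ω | t < Y ω} = ENNReal.ofReal (exp (-t))) :
    Integrable (fun ω => exp (1 / 2 * Y ω)) μ :=
  ⟨(hY.const_mul _).exp.aestronglyMeasurable, by
    rw [hasFiniteIntegral_iff_ofReal (ae_of_all _ fun ω => (exp_pos _).le)]
    exact (lintegral_exp_half_mul_le_two hY hY_tail).trans_lt ENNReal.ofNat_lt_top⟩

lemma mgf_half_le_two {Y : Ω → ℝ} (hY : Measurable Y)
    (hY_tail : ∀ t, 0 ≤ t → μ {ω | t < Y ω} = ENNReal.ofReal (exp (-t))) :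
    mgf Y μ (1 / 2) ≤ 2 := by
  rw [mgf, integral_eq_lintegral_of_nonneg_ae (ae_of_all _ fun ω => (exp_pos _).le)
    (hY.const_mul _).exp.aestronglyMeasurable]
  exact ENNReal.toReal_le_of_le_ofReal zero_le_two
    (by simpa using lintegral_exp_half_mul_le_two hY hY_tail)

lemma measure_lt_sum_le_two_pow_mul_exp {ι : Type*} [Fintype ι] {Y : ι → Ω → ℝ}
    (hY : ∀ i, Measurable (Y i)) (hY_indep : iIndepFun Y μ)
    (hY_tail : ∀ i t, 0 ≤ t → μ {ω | t < Y i ω} = ENNReal.ofReal (exp (-t))) (t : ℝ) :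
    μ {ω | t < ∑ i, Y i ω} ≤ ENNReal.ofReal (2 ^ Fintype.card ι * exp (-(1 / 2) * t)) := by
  have h_mgf : mgf (∑ i, Y i) μ (1 / 2) ≤ 2 ^ Fintype.card ι :=
    calc mgf (∑ i, Y i) μ (1 / 2) = ∏ i, mgf (Y i) μ (1 / 2) := hY_indep.mgf_sum hY _
      _ ≤ ∏ _ : ι, (2 : ℝ) :=
          Finset.prod_le_prod (fun _ _ => mgf_nonneg) fun i _ => mgf_half_le_two (hY i) (hY_tail i)
      _ = 2 ^ Fintype.card ι := by simp
  have h_chernoff := measure_ge_le_exp_mul_mgf (X := ∑ i, Y i) t (by norm_num : (0 : ℝ) ≤ 1 / 2)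
    (hY_indep.integrable_exp_mul_sum hY (s := Finset.univ) fun i _ =>
      integrable_exp_half_mul (hY i) (hY_tail i))
  calc μ {ω | t < ∑ i, Y i ω} ≤ μ {ω | t ≤ (∑ i, Y i) ω} :=
        measure_mono fun ω hω => by simpa using le_of_lt hω
    _ = ENNReal.ofReal (μ.real {ω | t ≤ (∑ i, Y i) ω}) :=
        (ofReal_measureReal (measure_ne_top _ _)).symm
    _ ≤ ENNReal.ofReal (2 ^ Fintype.card ι * exp (-(1 / 2) * t)) := by
        refine ENNReal.ofReal_le_ofReal (h_chernoff.trans ?_)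
        rw [mul_comm]
        exact mul_le_mul_of_nonneg_right h_mgf (exp_pos _).le

end

theorem expectation_max_sums_of_exponentials_general
    {Ω : Type*} [MeasurableSpace Ω] (μ : Measure Ω) [IsProbabilityMeasure μ]
    (k m : ℕ) (hm : 1 ≤ m)
    (T : Fin m → Ω → ℝ)
    (hT : ∀ i : Fin m, ∃ (ki : ℕ), ki ≤ k ∧ ∃ Y : Fin ki → Ω → ℝ,
      (∀ l, Measurable (Y l)) ∧
      iIndepFun Y μ ∧
      (∀ (l : Fin ki) (t : ℝ), 0 ≤ t →
        μ {ω | t < Y l ω} = ENNReal.ofReal (Real.exp (-t))) ∧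
      T i = fun ω => ∑ l : Fin ki, Y l ω) :
    ∫ ω, (⨆ i : Fin m, T i ω) ∂μ ≤ 2 * k + 2 * Real.log m + 2 := by
  have : Nonempty (Fin m) := ⟨⟨0, hm⟩⟩
  have hT_meas : ∀ i, Measurable (T i) := by
    intro i
    obtain ⟨ki, -, Y, hY, -, -, hT_eq⟩ := hT i
    rw [hT_eq]
    exact Finset.measurable_sum _ fun l _ => hY l
  have hT_tail : ∀ i t, μ {ω | t < T i ω} ≤ ENNReal.ofReal (2 ^ k * exp (-(1 / 2) * t)) := by
    intro i t
    obtain ⟨ki, hki, Y, hY, hY_indep, hY_tail, hT_eq⟩ := hT i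
    rw [hT_eq]
    refine (measure_lt_sum_le_two_pow_mul_exp hY hY_indep hY_tail t).trans
      (ENNReal.ofReal_le_ofReal ?_)
    gcongr
    · norm_num
    · simpa using hki
  have hM_tail (t : ℝ) :
      μ {ω | t < ⨆ i, T i ω} ≤ ENNReal.ofReal (m * 2 ^ k * exp (-(1 / 2) * t)) :=
    calc μ {ω | t < ⨆ i, T i ω} ≤ ∑ i, μ {ω | t < T i ω} := measure_lt_iSup_le_sum T t
      _ ≤ ∑ _ : Fin m, ENNReal.ofReal (2 ^ k * exp (-(1 / 2) * t)) :=
          Finset.sum_le_sum fun i _ => hT_tail i t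
      _ = ENNReal.ofReal (m * 2 ^ k * exp (-(1 / 2) * t)) := by
          rw [Finset.sum_const, Finset.card_univ, Fintype.card_fin, nsmul_eq_mul, mul_assoc,
            ENNReal.ofReal_mul (Nat.cast_nonneg m), ENNReal.ofReal_natCast]
  have hC : 1 ≤ (m : ℝ) * 2 ^ k := one_le_mul_of_one_le_of_one_le (by exact_mod_cast hm)
    (one_le_pow₀ one_le_two)
  calc ∫ ω, (⨆ i, T i ω) ∂μ ≤ (∫⁻ t in Ioi 0, μ {ω | t < ⨆ i, T i ω}).toReal :=
        integral_le_toReal_setLIntegral_measure_lt (Measurable.iSup hT_meas).aemeasurable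
    _ ≤ (log (m * 2 ^ k) + 1) / (1 / 2) := ENNReal.toReal_le_of_le_ofReal
        (div_nonneg (by linarith [log_nonneg hC]) one_half_pos.le)
        (setLIntegral_Ioi_zero_le_of_le_mul_exp hC one_half_pos (fun _ => prob_le_one) hM_tail)
    _ ≤ 2 * k + 2 * log m + 2 := by
        rw [log_mul (by positivity) (by positivity), log_pow]
        nlinarith [log_two_lt_d9, (Nat.cast_nonneg k : (0 : ℝ) ≤ k)]

/-- Probabilistic content of the paper's Lemma 2.1: if each of `T 1, …, T m` is a
sum of at most `k` independent rate-1 exponential random variables, then the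
expected value of their maximum is at most `2k + 2 ln m + 2`. -/
theorem expectation_max_sums_of_exponentials
    {Ω : Type*} [MeasurableSpace Ω] (μ : Measure Ω) [IsProbabilityMeasure μ]
    (k m : ℕ) (hk : 1 ≤ k) (hm : 1 ≤ m)
    (T : Fin m → Ω → ℝ)
    (hT : ∀ i : Fin m, ∃ (ki : ℕ), ki ≤ k ∧ ∃ Y : Fin ki → Ω → ℝ,
      (∀ l, Measurable (Y l)) ∧
      iIndepFun Y μ ∧
      (∀ (l : Fin ki) (t : ℝ), 0 ≤ t →
        μ {ω | t < Y l ω} = ENNReal.ofReal (Real.exp (-t))) ∧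
      T i = fun ω => ∑ l : Fin ki, Y l ω) :
    ∫ ω, (⨆ i : Fin m, T i ω) ∂μ ≤ 2 * k + 2 * Real.log m + 2 :=
  expectation_max_sums_of_exponentials_general μ k m hm T hT
end
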